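/- Fix p with p ≥ 3 and ε₋ with 0 < ε₋ < 1, and set ε₊ := 1/ε₋. Define a real sequence by α₀ := 0 and α_{n+1} := (max(ε₋, min(α_n, ε₊)))^{2-p}. Then for every n ≥ 1 one has α_n = ε₋^{(-1)^n (p-2)}; in particular the sequence oscillates between the two values ε₋^{p-2} and ε₋^{-(p-2)} and does not converge (when ε₋ ≠ 1), showing the Kačanov iteration fails for p ≥ 3. -/
import Mathlib

open Filter

/-- for `p ≥ 3`, `0 < ε₋ < 1`, `ε₊ = 1/ε₋`, the Kačanov iterates
`α₀ = 0`, `α_{n+1} = (clamp α_n)^(2-p)` satisfy `α_n = ε₋^((-1)^n (p-2))` for `n ≥ 1`;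
in particular the sequence oscillates and does not converge. -/
theorem stmt_16 (p εm : ℝ) (hp : 3 ≤ p) (hεm : 0 < εm) (hεm1 : εm < 1)
    (α : ℕ → ℝ) (h0 : α 0 = 0)
    (hrec : ∀ n : ℕ, α (n + 1) = (max εm (min (α n) (1 / εm))) ^ (2 - p)) :
    (∀ n : ℕ, 1 ≤ n → α n = εm ^ ((-1 : ℝ) ^ n * (p - 2))) ∧
    ¬ ∃ l : ℝ, Tendsto α atTop (nhds l) := by
  have hc : (1:ℝ) ≤ p - 2 := by linarith
  have hcpos : (0:ℝ) < p - 2 := by linarith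
  have hinv : 1 / εm = εm ^ (-1 : ℝ) := by
    rw [Real.rpow_neg_one]; rw [one_div]
  have hA : 1 / εm ≤ εm ^ (-(p - 2)) := by
    rw [hinv]
    exact (Real.rpow_le_rpow_left_iff_of_base_lt_one hεm hεm1).mpr (by linarith)
  have hB : εm ^ (p - 2) ≤ εm := by
    nth_rewrite 2 [(Real.rpow_one εm).symm]
    exact (Real.rpow_le_rpow_left_iff_of_base_lt_one hεm hεm1).mpr hc
  have hεinv : εm ≤ 1 / εm := by
    rw [le_div_iff₀ hεm]; nlinarith
  have hBle : εm ^ (p - 2) ≤ 1 / εm := le_trans hB hεinv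
  have key : ∀ n : ℕ, α (n + 1) = εm ^ ((-1 : ℝ) ^ (n+1) * (p - 2)) := by
    intro n
    induction n with
    | zero =>
      rw [hrec 0, h0]
      have : min (0:ℝ) (1/εm) = 0 := min_eq_left (by positivity)
      rw [this, max_eq_left (le_of_lt hεm)]
      norm_num
    | succ n ih =>
      rcases Nat.even_or_odd (n+1) with he | ho
      · -- α(n+1) = εm^(p-2), small; clamp to εm
        have hv : α (n+1) = εm ^ (p - 2) := by
          rw [ih, he.neg_one_pow, one_mul]
        have ho2 : Odd (n+2) := Even.add_one he
        rw [hrec (n+1), hv, min_eq_left hBle, max_eq_left hB]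
        congr 1
        rw [ho2.neg_one_pow]; ring
      · -- α(n+1) = εm^(-(p-2)), large; clamp to 1/εm
        have hv : α (n+1) = εm ^ (-(p - 2)) := by
          rw [ih, ho.neg_one_pow, neg_one_mul]
        have he2 : Even (n+2) := Odd.add_one ho
        rw [hrec (n+1), hv, min_eq_right hA, max_eq_right hεinv, hinv,
          ← Real.rpow_mul (le_of_lt hεm)]
        congr 1
        rw [he2.neg_one_pow]; ring
  refine ⟨fun n hn => ?_, fun ⟨l, hl⟩ => ?_⟩
  · obtain ⟨m, rfl⟩ := Nat.exists_eq_add_of_le hn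
    simpa [add_comm] using key m
  · have hm1 : Tendsto (fun k : ℕ => 2*k+1) atTop atTop :=
      tendsto_atTop.mpr fun b => eventually_atTop.mpr ⟨b, fun k hk => by omega⟩
    have hm2 : Tendsto (fun k : ℕ => 2*k+2) atTop atTop :=
      tendsto_atTop.mpr fun b => eventually_atTop.mpr ⟨b, fun k hk => by omega⟩
    have h1 : Tendsto (fun k : ℕ => α (2*k+1)) atTop (nhds l) := hl.comp hm1
    have h2 : Tendsto (fun k : ℕ => α (2*k+2)) atTop (nhds l) := hl.comp hm2
    have e1 : ∀ k : ℕ, α (2*k+1) = εm ^ (-(p-2)) := by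
      intro k
      have hodd : Odd (2*k+1) := ⟨k, by ring⟩
      rw [key (2*k), hodd.neg_one_pow, neg_one_mul]
    have e2 : ∀ k : ℕ, α (2*k+2) = εm ^ (p-2) := by
      intro k
      have hev : Even (2*k+2) := ⟨k+1, by ring⟩
      rw [show 2*k+2 = (2*k+1)+1 from rfl, key (2*k+1),
        show (2*k+1)+1 = 2*k+2 from rfl, hev.neg_one_pow, one_mul]
    have l1 : l = εm ^ (-(p-2)) :=
      tendsto_nhds_unique h1 (tendsto_const_nhds.congr (fun k => (e1 k).symm))
    have l2 : l = εm ^ (p-2) :=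
      tendsto_nhds_unique h2 (tendsto_const_nhds.congr (fun k => (e2 k).symm))
    have hlt : εm ^ (p-2) < εm ^ (-(p-2)) :=
      (Real.rpow_lt_rpow_left_iff_of_base_lt_one hεm hεm1).mpr (by linarith)
    rw [← l1, ← l2] at hlt
    exact lt_irrefl l hlt
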